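/- For every inequation I between types, nf(I) is equivalent to I: a parameter substitution Φ solves I if and only if Φ solves nf(I) (where nf(I) = true is solved by every Φ and nf(I) = false by none). -/

import Mathlib

/-- Types over a type alphabet whose constructors are at most unary:
type parameters, nullary constructors and unary constructors. -/
inductive UTy (C : Type) where
  | param : ℕ → UTy C
  | con0 : C → UTy C
  | con1 : C → UTy C → UTy C
deriving DecidableEq

/-- The subtype relation on types (arguments are compared only up to the
minimum of the arities). -/
inductive USub {C : Type} [LE C] : UTy C → UTy C → Prop where
  | param (n : ℕ) : USub (.param n) (.param n)
  | con00 {K L : C} : K ≤ L → USub (.con0 K) (.con0 L)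
  | con01 {K L : C} {τ : UTy C} : K ≤ L → USub (.con0 K) (.con1 L τ)
  | con10 {K L : C} {σ : UTy C} : K ≤ L → USub (.con1 K σ) (.con0 L)
  | con11 {K L : C} {σ τ : UTy C} : K ≤ L → USub σ τ →
      USub (.con1 K σ) (.con1 L τ)

/-- Applying a parameter substitution to a type. -/
def UTy.subst {C : Type} (Φ : ℕ → UTy C) : UTy C → UTy C
  | .param n => Φ n
  | .con0 K => .con0 K
  | .con1 K σ => .con1 K (σ.subst Φ)

/-- The list of type parameters of a type. -/
def UTy.params {C : Type} : UTy C → List ℕ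
  | .param n => [n]
  | .con0 _ => []
  | .con1 _ σ => σ.params

/-- The depth of a type. -/
def UTy.depth {C : Type} : UTy C → ℕ
  | .param _ => 0
  | .con0 _ => 1
  | .con1 _ σ => 1 + σ.depth

/-- The domain of a parameter substitution. -/
def substDom {C : Type} (Φ : ℕ → UTy C) : Set ℕ := {n | Φ n ≠ .param n}

/-- `AllParSubst A` is the set of parameter substitutions `Φ` with
`dom(Φ) ⊆ A`, `depth(Φ) ≤ 1`, and `Par(αΦ) ⊆ {α}` but `αΦ ≠ α`
for all `α ∈ A`. -/
def AllParSubst {C : Type} (A : Set ℕ) : Set (ℕ → UTy C) :=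
  {Φ | substDom Φ ⊆ A ∧ (∀ m ∈ substDom Φ, (Φ m).depth ≤ 1) ∧
    ∀ a ∈ A, (∀ n ∈ (Φ a).params, n = a) ∧ Φ a ≠ .param a}

/-- A type inequation `σ ⪯ τ`. -/
abbrev UIneq (C : Type) := UTy C × UTy C

/-- A system of type inequations is solvable. -/
def USolvable {C : Type} [LE C] (I : Set (UIneq C)) : Prop :=
  ∃ Φ : ℕ → UTy C, ∀ p ∈ I, USub (p.1.subst Φ) (p.2.subst Φ)

/-- The set of type parameters of a system of type inequations. -/
def sysParams {C : Type} (I : Set (UIneq C)) : Set ℕ :=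
  {n | ∃ p ∈ I, n ∈ p.1.params ∨ n ∈ p.2.params}

/-- Applying a parameter substitution to a system of type inequations. -/
def applySys {C : Type} (Φ : ℕ → UTy C) (I : Set (UIneq C)) : Set (UIneq C) :=
  (fun p : UIneq C => (p.1.subst Φ, p.2.subst Φ)) '' I

/-- The possible results of normalizing a type inequation: `true`, `false`,
or an inequation. -/
inductive NFr (C : Type) where
  | isTrue : NFr C
  | isFalse : NFr C
  | ineq : UTy C → UTy C → NFr C

open Classical in
/-- The normal form `nf(σ ⪯ τ)` of a type inequation. -/
noncomputable def nf {C : Type} [LE C] : UTy C → UTy C → NFr C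
  | .param a, τ => .ineq (.param a) τ
  | σ, .param a => .ineq σ (.param a)
  | .con0 K, .con0 L => if K ≤ L then .isTrue else .isFalse
  | .con0 K, .con1 L _ => if K ≤ L then .isTrue else .isFalse
  | .con1 K _, .con0 L => if K ≤ L then .isTrue else .isFalse
  | .con1 K σ, .con1 L τ => if K ≤ L then nf σ τ else .isFalse

/-- A parameter substitution solves the result of normalizing an inequation:
`true` is solved by every substitution, `false` by none. -/
def SolvesNF {C : Type} [LE C] (Φ : ℕ → UTy C) : NFr C → Prop
  | .isTrue => True
  | .isFalse => False
  | .ineq σ τ => USub (σ.subst Φ) (τ.subst Φ)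

namespace USub

variable {C : Type} [LE C] {K L : C} {σ τ : UTy C}

@[simp]
theorem con0_con0_iff : USub (.con0 K : UTy C) (.con0 L) ↔ K ≤ L :=
  ⟨fun h => by cases h; assumption, con00⟩

@[simp]
theorem con0_con1_iff : USub (.con0 K) (.con1 L τ) ↔ K ≤ L :=
  ⟨fun h => by cases h; assumption, con01⟩

@[simp]
theorem con1_con0_iff : USub (.con1 K σ) (.con0 L) ↔ K ≤ L :=
  ⟨fun h => by cases h; assumption, con10⟩

@[simp]
theorem con1_con1_iff : USub (.con1 K σ) (.con1 L τ) ↔ K ≤ L ∧ USub σ τ :=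
  ⟨fun h => by cases h; constructor <;> assumption, fun h => con11 h.1 h.2⟩

end USub

@[simp]
theorem solvesNF_ite_isFalse {C : Type} [LE C] (Φ : ℕ → UTy C) (p : Prop) [Decidable p]
    (r : NFr C) : SolvesNF Φ (if p then r else .isFalse) ↔ p ∧ SolvesNF Φ r := by
  split_ifs with hp <;> simp [SolvesNF, hp]

/-- for every type inequation `I = σ ⪯ τ`, `nf(I)` is equivalent
to `I`: a parameter substitution `Φ` solves `I` iff it solves `nf(I)`. -/
theorem nf_equiv {C : Type} [PartialOrder C] (Φ : ℕ → UTy C) (σ τ : UTy C) :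
    USub (σ.subst Φ) (τ.subst Φ) ↔ SolvesNF Φ (nf σ τ) := by
  induction σ generalizing τ with
  | param a => rfl
  | con0 K => cases τ <;> simp [nf, SolvesNF.eq_1, SolvesNF.eq_3, UTy.subst]
  | con1 K σ ih => cases τ <;> simp [nf, SolvesNF.eq_1, SolvesNF.eq_3, UTy.subst, ih]
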